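/- For every ε > 0 there is a constant C(ε) such that the following holds. Let n ≥ 2 be an integer and f ∈ F_q[t] a polynomial of degree 2n, and let N(f) be the number of monic polynomials a of degree n with a*·a = f. Then N(f) ≤ C(ε) · min { 2^n, q^{(2+ε) n / log_q n} }. -/

import Mathlib

/-!
If `a` is counted by `N(f)` then `a(0) ≠ 0`, so `a* = a.mirror` and `f = a* · a`. Writing `σ p`
for the monic reciprocal of an irreducible `p`, the multiplicities satisfy
`v_p(a) + v_{σ p}(a) = v_p(f)`.
On each pair `{p, σ p}` the vector `(v_p(a))` thus has one free coordinate in `[0, v_p(f)]`, and the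
coordinate at a self-reciprocal `p` is forced; hence `N(f)² ≤ τ(f) = ∏ (v_p(f) + 1)`, the number of
monic divisors of `f`. Since `v_p(f) + 1 ≤ 2^{v_p(f) deg p}`, this gives `N(f) ≤ 2ⁿ`.

For the second bound, if `(log q)² ≥ log 2 · log n` then `2ⁿ` is already smaller. Otherwise split
the primes at degree `D = ⌊log_q n / 2⌋`: those of degree `> D` contribute at most `2^s` with
`(D + 1) s ≤ 2n`, i.e. at most `q^{4n / log_q n}`, while there are at most `q^{D+1} ≤ √n · q` of
smaller degree, each contributing at most `2n + 1`. As `q ≤ exp √(log n)`, the latter product is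
`exp (n^{1/2 + o(1)})`, which is absorbed into `C(ε) · q^{2εn / log_q n}`.
-/

open Polynomial UniqueFactorizationMonoid Real

theorem Multiset.count_map_eq_count_of_involutive_on {α : Type*} [DecidableEq α] {σ : α → α}
    {s : Multiset α} {p : α} (hs : ∀ x ∈ s, σ (σ x) = x) (hp : σ (σ p) = p) :
    (s.map σ).count p = s.count (σ p) := by
  rw [Multiset.count_map, Multiset.count_eq_card_filter_eq]
  congr 1
  refine Multiset.filter_congr fun x hx => ?_
  constructor
  · rintro rfl; exact hs x hx
  · rintro rfl; exact hp.symm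

theorem Set.ncard_sq_le_prod_of_add_comp_eq {α β : Type*} {T : Finset α} {σ : α → α}
    (hσT : ∀ p ∈ T, σ p ∈ T) (hσσ : ∀ p ∈ T, σ (σ p) = p) {e : α → ℕ} {S : Set β}
    {x : β → α → ℕ} (hx : ∀ b ∈ S, ∀ p ∈ T, x b p + x b (σ p) = e p)
    (hinj : ∀ b ∈ S, ∀ b' ∈ S, (∀ p ∈ T, x b p = x b' p) → b = b') :
    S.ncard ^ 2 ≤ ∏ p ∈ T, (e p + 1) := by
  classical
  let _ : LinearOrder α := WellOrderingRel.isWellOrder.linearOrder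
  -- On each pair `{p, σ p}` the first point records `a`, the second `b`; the partner
  -- coordinate of each is then forced by `x c p + x c (σ p) = e p`.
  let Φ : S × S → ∀ p : T, Fin (e p + 1) := fun ab p =>
    let c : S := if p.1 ≤ σ p.1 then ab.1 else ab.2
    ⟨x c p, Nat.lt_succ_of_le (le_of_add_le_left (hx c c.2 p p.2).le)⟩
  have hforced : ∀ c ∈ S, ∀ c' ∈ S, ∀ p ∈ T, x c (σ p) = x c' (σ p) → x c p = x c' p :=
    fun c hc c' hc' p hp h => by have := hx c hc p hp; have := hx c' hc' p hp; omega
  have hΦ : Function.Injective Φ := by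
    rintro ⟨⟨a, ha⟩, ⟨b, hb⟩⟩ ⟨⟨a', ha'⟩, ⟨b', hb'⟩⟩ h
    have hcoord : ∀ p (hp : p ∈ T), (p ≤ σ p → x a p = x a' p) ∧ (¬ p ≤ σ p → x b p = x b' p) :=
      fun p hp => by
        have := congrArg Fin.val (congrFun h ⟨p, hp⟩)
        exact ⟨fun hle => by simpa [Φ, hle] using this, fun hle => by simpa [Φ, hle] using this⟩
    have hσle : ∀ p ∈ T, (σ p ≤ σ (σ p) ↔ σ p ≤ p) := fun p hp => by rw [hσσ p hp]
    simp only [Prod.mk.injEq, Subtype.mk.injEq]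
    constructor
    · refine hinj a ha a' ha' fun p hp => ?_
      by_cases hle : p ≤ σ p
      · exact (hcoord p hp).1 hle
      · refine hforced a ha a' ha' p hp ((hcoord _ (hσT p hp)).1 ?_)
        rw [hσle p hp]; exact (not_le.1 hle).le
    · refine hinj b hb b' hb' fun p hp => ?_
      rcases lt_trichotomy p (σ p) with hlt | heq | hgt
      · refine hforced b hb b' hb' p hp ((hcoord _ (hσT p hp)).2 ?_)
        rw [hσle p hp]; exact not_le.2 hlt
      · have := hx b hb p hp; have := hx b' hb' p hp
        rw [← heq] at *; omega
      · exact (hcoord p hp).2 (not_le.2 hgt)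
  calc S.ncard ^ 2 = Nat.card (S × S) := by rw [Nat.card_prod, Nat.card_coe_set_eq, sq]
    _ ≤ Nat.card (∀ p : T, Fin (e p + 1)) := Nat.card_le_card_of_injective Φ hΦ
    _ = ∏ p ∈ T, (e p + 1) := by
      rw [Nat.card_eq_fintype_card, Fintype.card_pi, ← Finset.prod_attach T (fun p => e p + 1)]
      simp

namespace Polynomial

theorem mirror_eq_reverse_of_natDegree_reverse {R : Type*} [Semiring R] {p : R[X]}
    (h : p.reverse.natDegree = p.natDegree) : p.mirror = p.reverse := by
  have : p.natTrailingDegree = 0 := by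
    have := natTrailingDegree_le_natDegree (p := p)
    rw [reverse_natDegree] at h
    omega
  rw [mirror, this, pow_zero, mul_one]

section Domain

variable {R : Type*} [CommRing R] [NoZeroDivisors R]

noncomputable def mirrorMulEquiv : R[X] ≃* R[X] where
  toFun := mirror
  invFun := mirror
  left_inv := mirror_involutive.leftInverse
  right_inv := mirror_involutive.rightInverse
  map_mul' p q := mirror_mul_of_domain p q

end Domain

variable {F : Type*} [Field F]

section Normalized

variable [DecidableEq F]

noncomputable def monicMirror (p : F[X]) : F[X] := normalize p.mirror

theorem monicMirror_monicMirror (p : F[X]) : monicMirror (monicMirror p) = normalize p := by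
  refine normalize_eq_normalize_iff_associated.2 ?_
  simpa [mirrorMulEquiv, monicMirror, mirror_mirror] using
    (normalize_associated p.mirror).map (mirrorMulEquiv (R := F))

theorem normalizedFactors_mirror {a : F[X]} (ha : a ≠ 0) :
    normalizedFactors a.mirror = (normalizedFactors a).map monicMirror := by
  have hassoc : Associated ((normalizedFactors a).map mirror).prod a.mirror := by
    simpa [mirrorMulEquiv, map_multiset_prod] using
      (prod_normalizedFactors ha).map (mirrorMulEquiv (R := F))
  rw [← hassoc.normalizedFactors_eq, normalizedFactors_prod_eq, Multiset.map_map]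
  · rfl
  intro q hq
  obtain ⟨p, hp, rfl⟩ := Multiset.mem_map.1 hq
  exact (irreducible_of_normalized_factor p hp).map (mirrorMulEquiv (R := F))

noncomputable def divisorCount (f : F[X]) : ℕ :=
  ∏ p ∈ (normalizedFactors f).toFinset, ((normalizedFactors f).count p + 1)

theorem sum_count_mul_natDegree_normalizedFactors (f : F[X]) :
    ∑ p ∈ (normalizedFactors f).toFinset, (normalizedFactors f).count p * p.natDegree =
      f.natDegree := by
  rcases eq_or_ne f 0 with rfl | hf
  · simp
  rw [← natDegree_eq_of_degree_eq (degree_normalize (p := f)), ← prod_normalizedFactors_eq hf,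
    natDegree_multiset_prod _ (zero_notMem_normalizedFactors f), Finset.sum_multiset_map_count]
  simp only [smul_eq_mul]

theorem one_le_natDegree_of_mem_normalizedFactors {f p : F[X]}
    (hp : p ∈ (normalizedFactors f).toFinset) : 1 ≤ p.natDegree :=
  (irreducible_of_normalized_factor p (Multiset.mem_toFinset.1 hp)).natDegree_pos

theorem divisorCount_le_two_pow (f : F[X]) : divisorCount f ≤ 2 ^ f.natDegree := by
  rw [← sum_count_mul_natDegree_normalizedFactors f, ← Finset.prod_pow_eq_pow_sum, divisorCount]
  refine Finset.prod_le_prod' fun p hp => ?_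
  calc _ ≤ 2 ^ (normalizedFactors f).count p := Nat.lt_two_pow_self
    _ ≤ _ := Nat.pow_le_pow_right two_pos
        (Nat.le_mul_of_pos_right _ (one_le_natDegree_of_mem_normalizedFactors hp))

omit [DecidableEq F] in
theorem card_le_card_pow_of_forall_natDegree_le [Fintype F] {T : Finset F[X]} {D : ℕ}
    (hT : ∀ p ∈ T, p.natDegree ≤ D) : T.card ≤ Fintype.card F ^ (D + 1) := by
  have hinj : Set.InjOn (fun p : F[X] => fun i : Fin (D + 1) => p.coeff i) T := by
    intro p hp p' hp' h
    ext k
    rcases le_or_gt k D with hk | hk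
    · exact congrFun h ⟨k, Nat.lt_succ_of_le hk⟩
    · rw [coeff_eq_zero_of_natDegree_lt ((hT p hp).trans_lt hk),
        coeff_eq_zero_of_natDegree_lt ((hT p' hp').trans_lt hk)]
  simpa [Fintype.card_fun] using
    Finset.card_le_card_of_injOn _ (fun p _ => Finset.mem_univ _) hinj

theorem exists_divisorCount_le [Fintype F] (f : F[X]) (D : ℕ) :
    ∃ s, (D + 1) * s ≤ f.natDegree ∧
      divisorCount f ≤ 2 ^ s * (f.natDegree + 1) ^ Fintype.card F ^ (D + 1) := by
  set T := (normalizedFactors f).toFinset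
  set e := fun p => (normalizedFactors f).count p
  have hsum : ∑ p ∈ T, e p * p.natDegree = f.natDegree :=
    sum_count_mul_natDegree_normalizedFactors f
  refine ⟨∑ p ∈ T with D < p.natDegree, e p, ?_, ?_⟩
  · calc (D + 1) * ∑ p ∈ T with D < p.natDegree, e p
        = ∑ p ∈ T with D < p.natDegree, e p * (D + 1) := by rw [Finset.mul_sum]; ring_nf
      _ ≤ ∑ p ∈ T with D < p.natDegree, e p * p.natDegree :=
          Finset.sum_le_sum fun p hp => Nat.mul_le_mul_left _ (Finset.mem_filter.1 hp).2
      _ ≤ f.natDegree := hsum ▸ Finset.sum_le_sum_of_subset (Finset.filter_subset _ _)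
  · rw [divisorCount, ← Finset.prod_filter_mul_prod_filter_not T (fun p => D < p.natDegree)]
    refine Nat.mul_le_mul ?_ ?_
    · rw [← Finset.prod_pow_eq_pow_sum]
      exact Finset.prod_le_prod' fun p _ => Nat.lt_two_pow_self
    · calc _ ≤ ∏ p ∈ T with ¬D < p.natDegree, (f.natDegree + 1) := by
            refine Finset.prod_le_prod' fun p hp => Nat.succ_le_succ ?_
            rw [← hsum]
            exact (Nat.le_mul_of_pos_right _ (one_le_natDegree_of_mem_normalizedFactors
              (Finset.filter_subset _ _ hp))).trans
              (Finset.single_le_sum (f := fun q => e q * q.natDegree) (fun q _ => Nat.zero_le _)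
                (Finset.filter_subset _ _ hp))
        _ ≤ _ := by
            rw [Finset.prod_const]
            exact Nat.pow_le_pow_right (Nat.succ_pos _) (card_le_card_pow_of_forall_natDegree_le
              fun p hp => not_lt.1 (Finset.mem_filter.1 hp).2)

theorem Monic.eq_of_normalizedFactors_eq {a b : F[X]} (ha : a.Monic) (hb : b.Monic)
    (h : normalizedFactors a = normalizedFactors b) : a = b := by
  rw [← ha.normalize_eq_self, ← hb.normalize_eq_self, ← prod_normalizedFactors_eq ha.ne_zero,
    ← prod_normalizedFactors_eq hb.ne_zero, h]

theorem normalizedFactors_reverse_mul_self {a f : F[X]} {n : ℕ} (ha : a.Monic)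
    (han : a.natDegree = n) (haf : a.reverse * a = f) (hf : f.natDegree = 2 * n) :
    normalizedFactors f = (normalizedFactors a).map monicMirror + normalizedFactors a := by
  have hrev : a.reverse ≠ 0 := by simpa using ha.ne_zero
  have hmirror : a.mirror = a.reverse := by
    refine mirror_eq_reverse_of_natDegree_reverse ?_
    rw [← haf, natDegree_mul hrev ha.ne_zero] at hf
    omega
  rw [← haf, ← hmirror, normalizedFactors_mul (hmirror ▸ hrev) ha.ne_zero,
    normalizedFactors_mirror ha.ne_zero]

theorem ncard_sq_le_divisorCount {n : ℕ} {f : F[X]} (hf : f.natDegree = 2 * n) :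
    {a : F[X] | a.Monic ∧ a.natDegree = n ∧ a.reverse * a = f}.ncard ^ 2 ≤ divisorCount f := by
  set S := {a : F[X] | a.Monic ∧ a.natDegree = n ∧ a.reverse * a = f}
  rcases S.eq_empty_or_nonempty with hS | ⟨a₀, ha₀⟩
  · simp [hS]
  have hfac : ∀ a ∈ S,
      normalizedFactors f = (normalizedFactors a).map monicMirror + normalizedFactors a :=
    fun a ha => normalizedFactors_reverse_mul_self ha.1 ha.2.1 ha.2.2 hf
  have hσσ : ∀ {g : F[X]}, ∀ p ∈ normalizedFactors g, monicMirror (monicMirror p) = p :=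
    fun p hp => (monicMirror_monicMirror p).trans (normalize_normalized_factor p hp)
  have hinv : (normalizedFactors f).map monicMirror = normalizedFactors f := by
    rw [hfac a₀ ha₀, Multiset.map_add, Multiset.map_map, add_comm]
    congr 1
    exact Multiset.map_congr rfl hσσ |>.trans (Multiset.map_id _)
  refine Set.ncard_sq_le_prod_of_add_comp_eq (σ := monicMirror)
    (x := fun a p => (normalizedFactors a).count p) ?_ ?_ ?_ ?_
  · intro p hp
    rw [Multiset.mem_toFinset] at hp ⊢
    exact hinv ▸ Multiset.mem_map_of_mem _ hp
  · exact fun p hp => hσσ p (Multiset.mem_toFinset.1 hp)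
  · intro a ha p hp
    rw [hfac a ha, Multiset.count_add, Multiset.count_map_eq_count_of_involutive_on hσσ
      (hσσ p (Multiset.mem_toFinset.1 hp)), add_comm]
  · intro a ha b hb hab
    have hle : ∀ c ∈ S, normalizedFactors c ≤ normalizedFactors f := fun c hc => by
      rw [hfac c hc]; exact Multiset.le_add_left _ _
    refine ha.1.eq_of_normalizedFactors_eq hb.1 (Multiset.ext.2 fun p => ?_)
    by_cases hp : p ∈ (normalizedFactors f).toFinset
    · exact hab p hp
    · have hp0 : (normalizedFactors f).count p = 0 :=
        Multiset.count_eq_zero.2 (mt Multiset.mem_toFinset.2 hp)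
      have := Multiset.count_le_of_le p (hle a ha)
      have := Multiset.count_le_of_le p (hle b hb)
      omega

end Normalized

end Polynomial

theorem exists_mul_pow_le_add_mul_pow_succ {K c : ℝ} (hK : 0 ≤ K) (hc : 0 < c) (k : ℕ) :
    ∃ M, 0 ≤ M ∧ ∀ t : ℝ, 0 ≤ t → K * t ^ k ≤ M + c * t ^ (k + 1) := by
  refine ⟨K * (K / c) ^ k, by positivity, fun t ht => ?_⟩
  rcases le_or_gt t (K / c) with htK | htK
  · have : K * t ^ k ≤ K * (K / c) ^ k := by gcongr
    nlinarith [pow_nonneg ht (k + 1)]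
  · have : K < c * t := (div_lt_iff₀' hc).1 htK
    have : K * t ^ k ≤ c * t * t ^ k := by gcongr
    have : 0 ≤ K * (K / c) ^ k := by positivity
    rw [pow_succ']; linarith

theorem exists_sqrt_mul_exp_sqrt_log_mul_log_le {c : ℝ} (hc : 0 < c) :
    ∃ M, 0 ≤ M ∧ ∀ x : ℝ, 2 ≤ x →
      √x * exp √(log x) * log (2 * x + 1) ≤ M + c * (x / log x) := by
  obtain ⟨M, hM0, hM⟩ :=
    exists_mul_pow_le_add_mul_pow_succ (K := 24 * exp 2) (c := c / 8) (by positivity)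
      (by positivity) 6
  refine ⟨M, hM0, fun x hx => ?_⟩
  -- Everything is a power of `t = x ^ (1/8)`, up to logarithmic factors bounded by `t`.
  set t := x ^ (1 / 8 : ℝ)
  have hx0 : 0 < x := by linarith
  have htx : t ^ 8 = x := by
    rw [← Real.rpow_natCast, ← Real.rpow_mul hx0.le]; norm_num
  have ht1 : 1 < t := Real.one_lt_rpow (by linarith) (by norm_num)
  have hlogx : log x = 8 * log t := by rw [← htx, Real.log_pow]; norm_num
  have hlogt : 0 < log t := Real.log_pos ht1
  have hlogt_le : log t ≤ t := (Real.log_le_sub_one_of_pos (by linarith)).trans (by linarith)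
  have hsqrt : √x = t ^ 4 := by
    rw [← htx, show t ^ 8 = (t ^ 4) ^ 2 by ring, Real.sqrt_sq (by positivity)]
  have hexp : exp √(log x) ≤ exp 2 * t := by
    have : √(log x) ≤ log t + 2 := by
      rw [hlogx, Real.sqrt_le_left (by positivity)]
      nlinarith [sq_nonneg (log t - 2)]
    calc exp √(log x) ≤ exp (log t + 2) := exp_le_exp.2 this
      _ = exp 2 * t := by rw [exp_add, exp_log (by linarith), mul_comm]
  have hlog : log (2 * x + 1) ≤ 24 * t := by
    have : 2 * x + 1 ≤ x ^ 3 := by nlinarith [mul_le_mul hx hx (by norm_num) hx0.le]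
    calc log (2 * x + 1) ≤ log (x ^ 3) := log_le_log (by positivity) this
      _ = 24 * log t := by rw [Real.log_pow, hlogx]; norm_num; ring
      _ ≤ 24 * t := by linarith
  have hdiv : t ^ 7 / 8 ≤ x / log x := by
    rw [hlogx, ← htx, div_le_div_iff₀ (by norm_num) (by positivity)]
    nlinarith [pow_pos (by linarith : (0:ℝ) < t) 7]
  calc √x * exp √(log x) * log (2 * x + 1) ≤ t ^ 4 * (exp 2 * t) * (24 * t) := by
        rw [hsqrt]; gcongr
        exact Real.log_nonneg (by linarith)
    _ = 24 * exp 2 * t ^ 6 := by ring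
    _ ≤ M + c / 8 * t ^ 7 := hM t (by linarith)
    _ ≤ M + c * (x / log x) := by nlinarith

theorem two_pow_le_exp_of_log_two_mul_le {ε lq ln : ℝ} (hε : 0 ≤ ε) (hln : 0 < ln)
    (h : log 2 * ln ≤ lq ^ 2) (n : ℕ) : (2 : ℝ) ^ n ≤ exp ((2 + ε) * (n * lq ^ 2 / ln)) := by
  rw [← exp_log (by positivity : (0 : ℝ) < 2 ^ n), Real.log_pow]
  refine exp_le_exp.2 ?_
  have : n * log 2 ≤ n * lq ^ 2 / ln := by
    rw [le_div_iff₀ hln, mul_assoc]; gcongr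
  have : 0 ≤ n * lq ^ 2 / ln := by positivity
  nlinarith

theorem two_pow_le_exp_of_mul_le {n q s D : ℕ} (hq : 2 ≤ q) (hn : 2 ≤ n)
    (hD : log n / log q / 2 < D + 1) (hs : (D + 1) * s ≤ 2 * n) :
    (2 : ℝ) ^ s ≤ exp (4 * (n * log q ^ 2 / log n)) := by
  have hlq : log 2 ≤ log q := log_le_log two_pos (by exact_mod_cast hq)
  have hlq0 : 0 < log q := (log_pos one_lt_two).trans_le hlq
  have hln0 : 0 < log n := log_pos (by exact_mod_cast hn)
  have hs' : (s : ℝ) * log n ≤ 4 * n * log q := by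
    have : ((D : ℝ) + 1) * s ≤ 2 * n := by exact_mod_cast hs
    rw [div_div, div_lt_iff₀ (by positivity)] at hD
    nlinarith [Nat.cast_nonneg (α := ℝ) s]
  rw [← exp_log (by positivity : (0 : ℝ) < 2 ^ s), Real.log_pow]
  refine exp_le_exp.2 ?_
  calc s * log 2 ≤ s * log q := by gcongr
    _ ≤ 4 * (n * log q ^ 2 / log n) := by
      rw [mul_div_assoc', le_div_iff₀ hln0]; nlinarith

theorem pow_pow_le_exp {ε M : ℝ}
    (hM : ∀ x : ℝ, 2 ≤ x → √x * exp √(log x) * log (2 * x + 1) ≤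
      M + 2 * ε * log 2 ^ 2 * (x / log x)) (hε : 0 < ε)
    {n q : ℕ} (hq : 2 ≤ q) (hn : 2 ≤ n) (h : log q ^ 2 < log 2 * log n) :
    ((2 * n + 1 : ℕ) : ℝ) ^ q ^ (⌊log n / log q / 2⌋₊ + 1) ≤
      exp (M + 2 * ε * (n * log q ^ 2 / log n)) := by
  set D := ⌊log n / log q / 2⌋₊
  have hlq : log 2 ≤ log q := log_le_log two_pos (by exact_mod_cast hq)
  have hlq0 : 0 < log q := (log_pos one_lt_two).trans_le hlq
  have hln0 : 0 < log n := log_pos (by exact_mod_cast hn)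
  have hq_le : log q ≤ √(log n) := by
    refine Real.le_sqrt_of_sq_le (h.le.trans ?_)
    nlinarith [log_two_lt_d9]
  have hqD : ((q ^ (D + 1) : ℕ) : ℝ) ≤ √n * exp √(log n) := by
    have hD : (D : ℝ) ≤ log n / log q / 2 := Nat.floor_le (by positivity)
    rw [← exp_log (by positivity : (0 : ℝ) < (q ^ (D + 1) : ℕ)), Nat.cast_pow, Real.log_pow,
      ← exp_log (by positivity : (0 : ℝ) < n), ← exp_half, exp_log (by positivity), ← exp_add]
    refine exp_le_exp.2 ?_
    push_cast
    rw [div_div, le_div_iff₀ (by positivity)] at hD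
    linarith
  have hlog : 0 ≤ log ((2 * n + 1 : ℕ) : ℝ) := log_nonneg (by norm_cast; omega)
  rw [← exp_log (by positivity : (0 : ℝ) < ((2 * n + 1 : ℕ) : ℝ) ^ q ^ (D + 1)),
    ← Nat.cast_pow ((2 * n + 1 : ℕ)), Nat.cast_pow (2 * n + 1), Real.log_pow]
  refine exp_le_exp.2 ?_
  calc ((q ^ (D + 1) : ℕ) : ℝ) * log ((2 * n + 1 : ℕ) : ℝ)
      ≤ √n * exp √(log n) * log (2 * n + 1) := by
        push_cast at hlog ⊢; exact mul_le_mul_of_nonneg_right (by exact_mod_cast hqD) hlog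
    _ ≤ M + 2 * ε * log 2 ^ 2 * (n / log n) := hM n (by exact_mod_cast hn)
    _ ≤ M + 2 * ε * (n * log q ^ 2 / log n) := by
        have : log 2 ^ 2 * (n / log n) ≤ n * log q ^ 2 / log n := by
          rw [mul_div_assoc', div_le_div_iff_of_pos_right hln0, mul_comm]
          gcongr
        nlinarith

namespace Polynomial

variable {F : Type*} [Field F]

theorem ncard_le_two_pow {n : ℕ} {f : F[X]} (hf : f.natDegree = 2 * n) :
    {a : F[X] | a.Monic ∧ a.natDegree = n ∧ a.reverse * a = f}.ncard ≤ 2 ^ n := by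
  classical
  refine (Nat.pow_le_pow_iff_left two_ne_zero).1 ?_
  calc _ ≤ divisorCount f := ncard_sq_le_divisorCount hf
    _ ≤ 2 ^ (2 * n) := hf ▸ divisorCount_le_two_pow f
    _ = (2 ^ n) ^ 2 := by rw [← pow_mul, mul_comm]

theorem ncard_le_exp_mul_rpow [Fintype F] {ε M : ℝ} (hε : 0 < ε) (hM0 : 0 ≤ M)
    (hM : ∀ x : ℝ, 2 ≤ x → √x * exp √(log x) * log (2 * x + 1) ≤
      M + 2 * ε * log 2 ^ 2 * (x / log x))
    {n : ℕ} (hn : 2 ≤ n) {f : F[X]} (hf : f.natDegree = 2 * n) :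
    ({a : F[X] | a.Monic ∧ a.natDegree = n ∧ a.reverse * a = f}.ncard : ℝ) ≤
      exp (M / 2) * (Fintype.card F : ℝ) ^
        ((2 + ε) * (n : ℝ) / (log (n : ℝ) / log (Fintype.card F : ℝ))) := by
  classical
  set N := {a : F[X] | a.Monic ∧ a.natDegree = n ∧ a.reverse * a = f}.ncard
  set q := Fintype.card F
  have hq : 2 ≤ q := Fintype.one_lt_card
  have hln : 0 < log n := log_pos (by exact_mod_cast hn)
  have hlq : 0 < log q := log_pos (by exact_mod_cast hq)
  set w := n * log q ^ 2 / log n with hw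
  have hrpow : (q : ℝ) ^ ((2 + ε) * n / (log n / log q)) = exp ((2 + ε) * w) := by
    rw [rpow_def_of_pos (by positivity)]; congr 1; rw [hw]; field_simp
  rw [hrpow]
  by_cases hcase : log 2 * log n ≤ log q ^ 2
  · calc (N : ℝ) ≤ 2 ^ n := by exact_mod_cast ncard_le_two_pow hf
      _ ≤ exp ((2 + ε) * w) := two_pow_le_exp_of_log_two_mul_le hε.le hln hcase n
      _ ≤ exp (M / 2) * exp ((2 + ε) * w) := le_mul_of_one_le_left (exp_pos _).le
          (one_le_exp (by positivity))
  obtain ⟨s, hs, hdiv⟩ := exists_divisorCount_le f ⌊log n / log q / 2⌋₊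
  rw [hf] at hs hdiv
  have hN : (N : ℝ) ^ 2 ≤ 2 ^ s * ((2 * n + 1 : ℕ) : ℝ) ^ q ^ (⌊log n / log q / 2⌋₊ + 1) := by
    exact_mod_cast (ncard_sq_le_divisorCount hf).trans hdiv
  refine (pow_le_pow_iff_left₀ (Nat.cast_nonneg _) (by positivity) two_ne_zero).1 ?_
  calc (N : ℝ) ^ 2 ≤ exp (4 * w) * exp (M + 2 * ε * w) := hN.trans <| mul_le_mul
        (two_pow_le_exp_of_mul_le hq hn (Nat.lt_floor_add_one _) hs)
        (pow_pow_le_exp hM hε hq hn (not_le.1 hcase)) (by positivity) (exp_pos _).le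
    _ = (exp (M / 2) * exp ((2 + ε) * w)) ^ 2 := by
        rw [mul_pow, ← exp_nat_mul, ← exp_nat_mul, ← exp_add, ← exp_add]
        congr 1; push_cast; ring

end Polynomial

/-- For every `ε > 0` there is a constant `C(ε)` such that the following holds. Let `n ≥ 2`
and `f ∈ F_q[t]` of degree `2n`, and let `N(f)` be the number of monic polynomials `a` of
degree `n` with `a*·a = f` (where `a*` is the reversed polynomial of `a`). Then
`N(f) ≤ C(ε) · min { 2ⁿ, q^{(2+ε) n / log_q n} }`. -/
theorem statement6 (ε : ℝ) (hε : 0 < ε) :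
    ∃ C : ℝ, 0 < C ∧
      ∀ (F : Type) [Field F] [Fintype F] (n : ℕ), 2 ≤ n →
        ∀ f : F[X], f.natDegree = 2 * n →
          ({a : F[X] | a.Monic ∧ a.natDegree = n ∧ a.reverse * a = f}.ncard : ℝ)
            ≤ C * min ((2 : ℝ) ^ n)
                ((Fintype.card F : ℝ) ^
                  ((2 + ε) * (n : ℝ) / (Real.log (n : ℝ) / Real.log (Fintype.card F : ℝ)))) := by
  obtain ⟨M, hM0, hM⟩ :=
    exists_sqrt_mul_exp_sqrt_log_mul_log_le (c := 2 * ε * log 2 ^ 2) (by positivity)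
  refine ⟨exp (M / 2), exp_pos _, fun F _ _ n hn f hf => ?_⟩
  rw [mul_min_of_nonneg _ _ (exp_pos _).le]
  refine le_min ?_ (ncard_le_exp_mul_rpow hε hM0 hM hn hf)
  calc _ ≤ (2 : ℝ) ^ n := by exact_mod_cast ncard_le_two_pow hf
    _ ≤ exp (M / 2) * 2 ^ n := le_mul_of_one_le_left (by positivity) (one_le_exp (by positivity))
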